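/- An (m,m)-function F is APN if and only if the number N_4(F) of quadruples (x,y,z,t) ∈ (F_2^m)^4 with x+y+z+t = 0 and F(x)+F(y)+F(z)+F(t) = 0 equals 3q^2 − 2q, where q = 2^m. -/

import Mathlib

/-!
Quadruples made of two pairs of equal entries always solve both equations, and inclusion–exclusion
over the three ways of pairing four entries counts 3q² − 2q of them. Every zero-sum quadruple is
(x, x + u, z, z + u) for some u; it is not made of two pairs exactly when u ≠ 0 and
z ∉ {x, x + u}, and it solves the second equation exactly when z, like x and x + u, solves
F (s + u) + F s = F (x + u) + F x. So a nontrivial solution is the same as a derivative equation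
with three solutions.
-/

open Finset

/-- `F` is almost perfect nonlinear: every derivative equation has at most 2 solutions. -/
def IsAPN {m : ℕ} (F : (Fin m → ZMod 2) → (Fin m → ZMod 2)) : Prop :=
  ∀ u : Fin m → ZMod 2, u ≠ 0 → ∀ v : Fin m → ZMod 2,
    (Finset.univ.filter (fun x : Fin m → ZMod 2 => F (x + u) + F x = v)).card ≤ 2

open Fintype Function

section PairedQuads

variable (α : Type*) [Fintype α] [DecidableEq α]

def pairedQuads : Finset (α × α × α × α) :=
  (univ.image fun p : α × α => (p.1, p.1, p.2, p.2)) ∪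
    (univ.image fun p : α × α => (p.1, p.2, p.1, p.2)) ∪
    (univ.image fun p : α × α => (p.1, p.2, p.2, p.1))

variable {α}

@[simp]
theorem mem_pairedQuads {x y z t : α} :
    (x, y, z, t) ∈ pairedQuads α ↔ (x = y ∧ z = t) ∨ (x = z ∧ y = t) ∨ (x = t ∧ y = z) := by
  simp only [pairedQuads, mem_union, mem_image, mem_univ, true_and, Prod.exists, Prod.mk.injEq]
  grind

theorem card_pairedQuads : #(pairedQuads α) = 3 * card α ^ 2 - 2 * card α := by
  have card_pairs (f : α × α → α × α × α × α) (hf : Injective f) :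
      #(univ.image f) = card α ^ 2 := by
    rw [card_image_of_injective _ hf, card_univ, card_prod, sq]
  rw [pairedQuads]
  set A := univ.image fun p : α × α => (p.1, p.1, p.2, p.2)
  set B := univ.image fun p : α × α => (p.1, p.2, p.1, p.2)
  set C := univ.image fun p : α × α => (p.1, p.2, p.2, p.1)
  set D := univ.image fun a : α => (a, a, a, a)
  have card_A : #A = card α ^ 2 := card_pairs _ fun p q h => by grind
  have card_B : #B = card α ^ 2 := card_pairs _ fun p q h => by grind
  have card_C : #C = card α ^ 2 := card_pairs _ fun p q h => by grind
  have card_D : #D = card α := by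
    rw [card_image_of_injective _ fun a b h => (Prod.ext_iff.1 h).1, card_univ]
  have inter_AB : A ∩ B = D := by
    ext ⟨x, y, z, t⟩
    simp only [A, B, D, mem_inter, mem_image, mem_univ, true_and, Prod.exists, Prod.mk.injEq]
    grind
  have inter_ABC : (A ∪ B) ∩ C = D := by
    ext ⟨x, y, z, t⟩
    simp only [A, B, C, D, mem_inter, mem_union, mem_image, mem_univ, true_and, Prod.exists,
      Prod.mk.injEq]
    grind
  have h₁ := card_union_add_card_inter A B
  have h₂ := card_union_add_card_inter (A ∪ B) C
  rw [inter_AB, card_A, card_B, card_D] at h₁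
  rw [inter_ABC, card_C, card_D] at h₂
  omega

end PairedQuads

section CharTwo

theorem ZModModule.add_eq_zero_iff_eq {G : Type*} [AddCommGroup G] [Module (ZMod 2) G] {x y : G} :
    x + y = 0 ↔ x = y := by
  rw [← ZModModule.sub_eq_add, sub_eq_zero]

variable {V W : Type*} [AddCommGroup V] [AddCommGroup W] [Fintype V] [DecidableEq V] [DecidableEq W]

def zeroSumQuads (F : V → W) : Finset (V × V × V × V) :=
  univ.filter fun p => p.1 + p.2.1 + p.2.2.1 + p.2.2.2 = 0 ∧
    F p.1 + F p.2.1 + F p.2.2.1 + F p.2.2.2 = 0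

theorem mem_zeroSumQuads {F : V → W} {x y z t : V} :
    (x, y, z, t) ∈ zeroSumQuads F ↔ x + y + z + t = 0 ∧ F x + F y + F z + F t = 0 := by
  simp [zeroSumQuads]

variable [Module (ZMod 2) V] [Module (ZMod 2) W]

theorem pairedQuads_subset_zeroSumQuads (F : V → W) : pairedQuads V ⊆ zeroSumQuads F := by
  rintro ⟨x, y, z, t⟩ hp
  rw [mem_pairedQuads] at hp
  rw [mem_zeroSumQuads]
  rcases hp with ⟨rfl, rfl⟩ | ⟨rfl, rfl⟩ | ⟨rfl, rfl⟩ <;>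
    exact ⟨by abel_nf; simp [two_zsmul, ZModModule.add_self],
      by abel_nf; simp [two_zsmul, ZModModule.add_self]⟩

theorem zeroSumQuads_subset_pairedQuads_iff (F : V → W) :
    zeroSumQuads F ⊆ pairedQuads V ↔
      ∀ u, u ≠ 0 → ∀ x z, F (x + u) + F x = F (z + u) + F z → z = x ∨ z = x + u := by
  constructor
  · intro hF u hu x z hxz
    have hmem : (x, x + u, z, z + u) ∈ zeroSumQuads F := by
      rw [← ZModModule.add_eq_zero_iff_eq] at hxz
      rw [mem_zeroSumQuads]
      refine ⟨by abel_nf; simp [two_zsmul, ZModModule.add_self], ?_⟩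
      rw [← hxz]; abel
    rcases mem_pairedQuads.1 (hF hmem) with ⟨h, -⟩ | ⟨h, -⟩ | ⟨-, h⟩
    · exact absurd (left_eq_add.1 h) hu
    · exact Or.inl h.symm
    · exact Or.inr h.symm
  · rintro hF ⟨x, y, z, t⟩ hp
    obtain ⟨hsum, hFsum⟩ := mem_zeroSumQuads.1 hp
    obtain ⟨u, rfl⟩ : ∃ u, y = x + u := ⟨-x + y, by abel⟩
    obtain rfl : t = z + u := by
      rw [ZModModule.add_eq_zero_iff_eq] at hsum
      rw [← hsum]; abel_nf; simp [two_zsmul, ZModModule.add_self]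
    rw [mem_pairedQuads]
    rcases eq_or_ne u 0 with rfl | hu
    · simp
    · have hderiv : F (x + u) + F x = F (z + u) + F z := by
        rw [← ZModModule.add_eq_zero_iff_eq, ← hFsum]; abel
      rcases hF u hu x z hderiv with rfl | rfl
      · simp
      · simp [add_assoc, ZModModule.add_self]

end CharTwo

theorem isAPN_iff_forall_derivative_eq {m : ℕ} (F : (Fin m → ZMod 2) → (Fin m → ZMod 2)) :
    IsAPN F ↔ ∀ u, u ≠ 0 → ∀ x z, F (x + u) + F x = F (z + u) + F z → z = x ∨ z = x + u := by
  constructor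
  · intro hF u hu x z hxz
    by_contra! hz
    have hsub : {x, x + u, z} ⊆ univ.filter fun s => F (s + u) + F s = F (x + u) + F x := by
      intro s
      simp only [mem_insert, mem_singleton, mem_filter, mem_univ, true_and]
      rintro (rfl | rfl | rfl)
      · rfl
      · rw [add_assoc, ZModModule.add_self, add_zero, add_comm]
      · exact hxz.symm
    have hcard : #{x, x + u, z} = 3 :=
      card_eq_three.2 ⟨x, x + u, z, fun h => hu (left_eq_add.1 h), Ne.symm hz.1,
        Ne.symm hz.2, rfl⟩
    have := (card_le_card hsub).trans (hF u hu _)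
    omega
  · intro hF u hu v
    rcases (univ.filter fun s => F (s + u) + F s = v).eq_empty_or_nonempty with h | ⟨x, hx⟩
    · simp [h]
    · refine (card_le_card (t := {x, x + u}) fun z hz => ?_).trans card_le_two
      rw [mem_filter] at hx hz
      simpa using hF u hu x z (hx.2.trans hz.2.symm)

/-- APN iff the number of zero-sum quadruples mapping to zero sum equals 3q² − 2q. -/
theorem apn_iff_card_quadruples {m : ℕ} (F : (Fin m → ZMod 2) → (Fin m → ZMod 2)) :
    IsAPN F ↔
      (Finset.univ.filter
          (fun p : (Fin m → ZMod 2) × (Fin m → ZMod 2) × (Fin m → ZMod 2) × (Fin m → ZMod 2) =>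
            p.1 + p.2.1 + p.2.2.1 + p.2.2.2 = 0 ∧
            F p.1 + F p.2.1 + F p.2.2.1 + F p.2.2.2 = 0)).card
        = 3 * (2 ^ m) ^ 2 - 2 * 2 ^ m := by
  have hq : card (Fin m → ZMod 2) = 2 ^ m := by simp
  have htriv := pairedQuads_subset_zeroSumQuads F
  change _ ↔ #(zeroSumQuads F) = _
  rw [isAPN_iff_forall_derivative_eq, ← zeroSumQuads_subset_pairedQuads_iff, ← hq,
    ← card_pairedQuads, subset_iff_eq_of_card_le (card_le_card htriv)]
  exact ⟨congrArg card, fun h => (eq_of_subset_of_card_le htriv h.le).symm⟩
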